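/- Let G ∈ ℚ⟦x,y⟧ be a formal power series in two variables satisfying G = 1 + x·y·G + x·G³. Then for all n ≥ 0 and 0 ≤ k ≤ n, (2n - 2k + 1) · [x^n y^k] G = binom(3n-2k, k) · binom(3n-3k, n-k), and [x^n y^k] G = 0 for k > n. That is, the ternary analogue matrix has general term binom(3n-2k,k)·binom(3n-3k,n-k)/(2n-2k+1). -/

import Mathlib

/-!
Substituting `z = x y`, one has `G(x, y) = H(x, x y)` where `H = 1 + z H + x H³`, i.e.
`(1 - z) H = 1 + x H³`. With the Fuss ballot numbers `Q(m, r) = r / (r + 3m) · C(r + 3m, m)`, put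
`H_{u,r} = ∑ₘ Q(m, r) xᵐ (1 - z)^{-(3m+u+1)}`. Vandermonde's identity in `z` and the Rothe–Hagen
convolution `∑ Q(i, r) Q(j, s) = Q(i + j, r + s)` in `x` give `H_{u,r} H_{u',r'} = H_{u+u'+1, r+r'}`,
so `H_{0,1}³ = H_{2,3}`, and `H_{0,1} = 1 + z H_{0,1} + x H_{2,3}` is a Pascal recurrence on
coefficients. Since `(2m + 1) Q(m, 1) = C(3m, m)`, the coefficient of `xⁿ yᵏ` in `H_{0,1}(x, x y)` is
the claimed one. The equation has only one solution: the difference `D` of two solutions satisfies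
`D = x W D`, hence is divisible by every power of `x`.
-/

open Finset MvPowerSeries

/-- `fussBallot k r = r / (r + 3k) · C(r + 3k, k)` is the coefficient of `zᵏ` in `T(z) ^ r`, where
`T = 1 + z T³`. -/
def fussBallot : ℕ → ℕ → ℚ
  | 0, _ => 1
  | k + 1, r => (r + 3 * k + 3).choose (k + 1) - 3 * (r + 3 * k + 2).choose k

@[simp] lemma fussBallot_zero (r : ℕ) : fussBallot 0 r = 1 := rfl

@[simp] lemma fussBallot_succ_zero (k : ℕ) : fussBallot (k + 1) 0 = 0 := by
  have h : ((3 * k + 3 : ℕ) * (3 * k + 2).choose k : ℚ) =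
      (3 * k + 3).choose (k + 1) * (k + 1) := by
    exact_mod_cast Nat.add_one_mul_choose_eq (3 * k + 2) k
  have hk : ((k : ℚ) + 1) ≠ 0 := by positivity
  refine (mul_right_inj' hk).mp ?_
  simp only [fussBallot, zero_add, mul_zero]
  push_cast at h ⊢
  linear_combination -h

lemma fussBallot_succ_succ (k r : ℕ) :
    fussBallot (k + 1) (r + 1) = fussBallot (k + 1) r + fussBallot k (r + 3) := by
  cases k with
  | zero => simp [fussBallot]
  | succ k =>
    simp only [fussBallot]
    rw [show r + 1 + 3 * (k + 1) + 3 = (r + 3 * k + 6) + 1 by ring,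
      show r + 1 + 3 * (k + 1) + 2 = (r + 3 * k + 5) + 1 by ring,
      show r + 3 * (k + 1) + 3 = r + 3 * k + 6 by ring,
      show r + 3 * (k + 1) + 2 = r + 3 * k + 5 by ring,
      show r + 3 + 3 * k + 3 = r + 3 * k + 6 by ring,
      show r + 3 + 3 * k + 2 = r + 3 * k + 5 by ring,
      Nat.choose_succ_succ', Nat.choose_succ_succ' (r + 3 * k + 5)]
    push_cast
    ring

theorem sum_antidiagonal_fussBallot_mul (n r s : ℕ) :
    ∑ p ∈ antidiagonal n, fussBallot p.1 r * fussBallot p.2 s = fussBallot n (r + s) := by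
  induction n generalizing r with
  | zero => simp
  | succ n ihn =>
    induction r with
    | zero => simp [Nat.sum_antidiagonal_succ]
    | succ r ihr =>
      rw [Nat.sum_antidiagonal_succ] at ihr ⊢
      simp only [fussBallot_succ_succ, add_mul, sum_add_distrib, ihn (r + 3),
        fussBallot_zero] at ihr ⊢
      rw [← add_assoc, ihr, add_right_comm r 1 s, fussBallot_succ_succ, add_right_comm r 3 s]

lemma fussBallot_three (m : ℕ) : fussBallot m 3 = fussBallot (m + 1) 1 := by
  rw [fussBallot_succ_succ, fussBallot_succ_zero, zero_add]

lemma two_mul_add_one_mul_fussBallot_one (m : ℕ) :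
    (2 * m + 1 : ℚ) * fussBallot m 1 = (3 * m).choose m := by
  cases m with
  | zero => simp
  | succ m =>
    have h₁ : ((3 * m + 4 : ℕ) * (3 * m + 3).choose m : ℚ) =
        (3 * m + 4).choose (m + 1) * (m + 1) := by
      exact_mod_cast Nat.add_one_mul_choose_eq (3 * m + 3) m
    have h₂ : ((3 * m + 3).choose (m + 1) * (m + 1) : ℚ) =
        (3 * m + 3).choose m * (2 * m + 3 : ℕ) := by
      rw [show 2 * m + 3 = 3 * m + 3 - m by omega]
      exact_mod_cast Nat.choose_succ_right_eq (3 * m + 3) m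
    have hm : ((m : ℚ) + 1) ≠ 0 := by positivity
    refine mul_left_cancel₀ hm ?_
    simp only [fussBallot, show 1 + 3 * m + 3 = 3 * m + 4 by ring,
      show 1 + 3 * m + 2 = 3 * m + 3 by ring, show 3 * (m + 1) = 3 * m + 3 by ring]
    push_cast at h₁ h₂ ⊢
    linear_combination (-(2 * (m : ℚ) + 3)) * h₁ - h₂

theorem sum_antidiagonal_choose_add_mul_choose_add (a b k : ℕ) :
    ∑ p ∈ antidiagonal k, ((a + p.1).choose p.1 * (b + p.2).choose p.2 : ℚ) =
      (a + b + 1 + k).choose k := by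
  have h := congrArg (fun f => PowerSeries.coeff k (Units.val f))
    (PowerSeries.invOneSubPow_add ℚ (a + 1) (b + 1))
  simp only [Units.val_mul, PowerSeries.coeff_mul,
    PowerSeries.invOneSubPow_val_succ_eq_mk_add_choose, PowerSeries.coeff_mk] at h
  rw [show a + 1 + (b + 1) = (a + b + 1) + 1 by ring,
    PowerSeries.invOneSubPow_val_succ_eq_mk_add_choose, PowerSeries.coeff_mk] at h
  rw [← Nat.choose_symm_add, h]
  exact sum_congr rfl fun p _ => by rw [Nat.choose_symm_add, Nat.choose_symm_add]

namespace MvPowerSeries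

variable {σ R : Type*}

theorem coeff_add_single_X_mul [Semiring R] (s : σ) (d : σ →₀ ℕ) (f : MvPowerSeries σ R) :
    coeff (d + Finsupp.single s 1) (X s * f) = coeff d f := by
  rw [X_def, coeff_monomial_mul, if_pos le_add_self, add_tsub_cancel_right, one_mul]

theorem coeff_X_mul_of_apply_eq_zero [Semiring R] {s : σ} {d : σ →₀ ℕ} (hd : d s = 0)
    (f : MvPowerSeries σ R) : coeff d (X s * f) = 0 := by
  rw [X_def, coeff_monomial_mul, if_neg (by rw [Finsupp.single_le_iff]; omega)]

theorem eq_zero_of_eq_X_mul_mul [CommSemiring R] (s : σ) {W D : MvPowerSeries σ R}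
    (h : D = X s * W * D) : D = 0 := by
  have hpow : ∀ N : ℕ, D = X s ^ N * (W ^ N * D) := by
    intro N
    induction N with
    | zero => simp
    | succ N ih => calc
        D = X s * W * (X s ^ N * (W ^ N * D)) := by rw [← ih]; exact h
        _ = X s ^ (N + 1) * (W ^ (N + 1) * D) := by ring
  ext d
  rw [hpow (d s + 1), X_pow_eq, coeff_monomial_mul, if_neg (by rw [Finsupp.single_le_iff]; omega)]
  simp

end MvPowerSeries

noncomputable def bideg (m k : ℕ) : Fin 2 →₀ ℕ := Finsupp.single 0 m + Finsupp.single 1 k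

@[simp] lemma bideg_apply_zero (m k : ℕ) : bideg m k 0 = m := by simp [bideg]

@[simp] lemma bideg_apply_one (m k : ℕ) : bideg m k 1 = k := by simp [bideg]

lemma bideg_apply_self (d : Fin 2 →₀ ℕ) : bideg (d 0) (d 1) = d := by
  ext i; fin_cases i <;> simp

lemma bideg_inj {m k m' k' : ℕ} : bideg m k = bideg m' k' ↔ m = m' ∧ k = k' := by
  refine ⟨fun h => ⟨?_, ?_⟩, fun h => by rw [h.1, h.2]⟩
  · simpa using DFunLike.congr_fun h 0
  · simpa using DFunLike.congr_fun h 1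

lemma bideg_add (m k m' k' : ℕ) : bideg m k + bideg m' k' = bideg (m + m') (k + k') := by
  ext i; fin_cases i <;> simp

lemma bideg_succ_left (m k : ℕ) : bideg (m + 1) k = bideg m k + Finsupp.single 0 1 := by
  ext i; fin_cases i <;> simp

lemma bideg_succ_right (m k : ℕ) : bideg m (k + 1) = bideg m k + Finsupp.single 1 1 := by
  ext i; fin_cases i <;> simp

theorem coeff_bideg_mul {R : Type*} [Semiring R] (f g : MvPowerSeries (Fin 2) R) (m k : ℕ) :
    coeff (bideg m k) (f * g) = ∑ p ∈ antidiagonal m, ∑ q ∈ antidiagonal k,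
      coeff (bideg p.1 q.1) f * coeff (bideg p.2 q.2) g := by
  rw [coeff_mul, ← sum_product']
  refine sum_nbij' (fun d => ((d.1 0, d.2 0), (d.1 1, d.2 1)))
    (fun pq => (bideg pq.1.1 pq.2.1, bideg pq.1.2 pq.2.2)) ?_ ?_ ?_ ?_ ?_
  · intro d hd
    have h0 := DFunLike.congr_fun (mem_antidiagonal.mp hd) 0
    have h1 := DFunLike.congr_fun (mem_antidiagonal.mp hd) 1
    simp only [Finsupp.add_apply, bideg_apply_zero, bideg_apply_one] at h0 h1
    simp [h0, h1]
  · intro pq hpq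
    simp_all [bideg_add]
  · intro d _
    simp [bideg_apply_self]
  · intro pq _
    simp
  · intro d _
    simp [bideg_apply_self]

/-- The series `∑ₘ fussBallot m r • xᵐ (1 - z) ^ (-(3m + u + 1))` in `x = X 0`, `z = X 1`. -/
noncomputable def fussSeries (u r : ℕ) : MvPowerSeries (Fin 2) ℚ :=
  fun d => ((3 * d 0 + d 1 + u).choose (d 1) : ℚ) * fussBallot (d 0) r

@[simp] lemma coeff_bideg_fussSeries (u r m k : ℕ) :
    coeff (bideg m k) (fussSeries u r) = ((3 * m + k + u).choose k : ℚ) * fussBallot m r := by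
  simp [fussSeries, coeff_apply]

theorem fussSeries_mul (u r u' r' : ℕ) :
    fussSeries u r * fussSeries u' r' = fussSeries (u + u' + 1) (r + r') := by
  ext d
  rw [← bideg_apply_self d]
  generalize d 0 = m, d 1 = k
  simp only [coeff_bideg_mul, coeff_bideg_fussSeries]
  calc ∑ p ∈ antidiagonal m, ∑ q ∈ antidiagonal k,
        (3 * p.1 + q.1 + u).choose q.1 * fussBallot p.1 r *
          ((3 * p.2 + q.2 + u').choose q.2 * fussBallot p.2 r')
      = ∑ p ∈ antidiagonal m, fussBallot p.1 r * fussBallot p.2 r' *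
          ∑ q ∈ antidiagonal k,
            ((3 * p.1 + u + q.1).choose q.1 * (3 * p.2 + u' + q.2).choose q.2 : ℚ) := by
        refine sum_congr rfl fun p _ => ?_
        rw [mul_sum]
        refine sum_congr rfl fun q _ => ?_
        rw [add_right_comm _ q.1, add_right_comm _ q.2]
        ring
    _ = ∑ p ∈ antidiagonal m, fussBallot p.1 r * fussBallot p.2 r' *
          (3 * m + k + (u + u' + 1)).choose k := by
        refine sum_congr rfl fun p hp => ?_
        rw [sum_antidiagonal_choose_add_mul_choose_add, ← mem_antidiagonal.mp hp]
        congr 3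
        ring
    _ = (3 * m + k + (u + u' + 1)).choose k * fussBallot m (r + r') := by
        rw [← sum_mul, sum_antidiagonal_fussBallot_mul, mul_comm]

theorem fussSeries_zero_one_eq :
    fussSeries 0 1 = 1 + X 1 * fussSeries 0 1 + X 0 * fussSeries 0 1 ^ 3 := by
  rw [pow_three, fussSeries_mul, fussSeries_mul]
  change fussSeries 0 1 = 1 + X 1 * fussSeries 0 1 + X 0 * fussSeries 2 3
  ext d
  rw [← bideg_apply_self d]
  generalize d 0 = m, d 1 = k
  rw [map_add, map_add, coeff_one]
  rcases m with _ | m <;> rcases k with _ | k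
  · rw [if_pos (by simp [bideg]), coeff_X_mul_of_apply_eq_zero (by simp),
      coeff_X_mul_of_apply_eq_zero (by simp)]
    simp
  · rw [if_neg (by simp [bideg]), coeff_X_mul_of_apply_eq_zero (s := 0) (by simp),
      bideg_succ_right, coeff_add_single_X_mul, ← bideg_succ_right]
    simp
  · rw [if_neg (by simp [bideg]), coeff_X_mul_of_apply_eq_zero (s := 1) (by simp),
      bideg_succ_left, coeff_add_single_X_mul, ← bideg_succ_left]
    simp [fussBallot_three]
  · rw [if_neg (by simp [bideg]), bideg_succ_right, coeff_add_single_X_mul, ← bideg_succ_right,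
      bideg_succ_left, coeff_add_single_X_mul, ← bideg_succ_left]
    simp only [coeff_bideg_fussSeries, fussBallot_three]
    rw [show 3 * (m + 1) + (k + 1) + 0 = (3 * m + k + 3) + 1 by ring, Nat.choose_succ_succ',
      show 3 * m + (k + 1) + 2 = 3 * m + k + 3 by ring,
      show 3 * (m + 1) + k + 0 = 3 * m + k + 3 by ring]
    push_cast
    ring

section Shear

variable {R : Type*} [CommRing R]

lemma hasSubst_shear : HasSubst ![(X 0 : MvPowerSeries (Fin 2) R), X 0 * X 1] :=
  hasSubst_of_constantCoeff_zero fun s => by fin_cases s <;> simp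

noncomputable def shear : MvPowerSeries (Fin 2) R →ₐ[R] MvPowerSeries (Fin 2) R :=
  substAlgHom hasSubst_shear

@[simp] lemma shear_X_zero : shear (X 0 : MvPowerSeries (Fin 2) R) = X 0 :=
  substAlgHom_X hasSubst_shear 0

@[simp] lemma shear_X_one : shear (X 1 : MvPowerSeries (Fin 2) R) = X 0 * X 1 :=
  substAlgHom_X hasSubst_shear 1

lemma prod_pow_shear (d : Fin 2 →₀ ℕ) :
    (d.prod fun s e => ![(X 0 : MvPowerSeries (Fin 2) R), X 0 * X 1] s ^ e) =
      monomial (bideg (d 0 + d 1) (d 1)) 1 := by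
  rw [Finsupp.prod_fintype d _ fun _ => pow_zero _, Fin.prod_univ_two]
  simp only [Matrix.cons_val_zero, Matrix.cons_val_one, mul_pow, X_pow_eq, monomial_mul_monomial]
  rw [mul_one, mul_one, bideg, Finsupp.single_add, add_assoc]

theorem coeff_bideg_shear (f : MvPowerSeries (Fin 2) R) (n k : ℕ) :
    coeff (bideg n k) (shear f) = if k ≤ n then coeff (bideg (n - k) k) f else 0 := by
  rw [shear, substAlgHom_apply, coeff_subst hasSubst_shear]
  simp only [prod_pow_shear, coeff_monomial, bideg_inj, smul_eq_mul, mul_ite, mul_one,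
    mul_zero]
  split_ifs with hkn
  · rw [finsum_eq_single _ (bideg (n - k) k)]
    · simp [hkn]
    · intro d hd
      refine if_neg fun h => hd ?_
      rw [← bideg_apply_self d, bideg_inj]
      omega
  · exact finsum_eq_zero_of_forall_eq_zero fun d => if_neg (by omega)

end Shear

/-- Let `G ∈ ℚ⟦x,y⟧` satisfy `G = 1 + xyG + xG³` (ternary analogue). Then for
`0 ≤ k ≤ n`, `(2n-2k+1)·[x^n y^k]G = C(3n-2k,k)·C(3n-3k,n-k)`, and `[x^n y^k]G = 0` for `k > n`. -/
theorem stmt_14 (G : MvPowerSeries (Fin 2) ℚ)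
    (hG : G = 1 + MvPowerSeries.X (0 : Fin 2) * MvPowerSeries.X (1 : Fin 2) * G
      + MvPowerSeries.X (0 : Fin 2) * G ^ 3) :
    (∀ n k : ℕ, k ≤ n →
      ((2 * n - 2 * k + 1 : ℕ) : ℚ) * MvPowerSeries.coeff
          (Finsupp.single (0 : Fin 2) n + Finsupp.single (1 : Fin 2) k) G
        = ((3 * n - 2 * k).choose k : ℚ) * ((3 * n - 3 * k).choose (n - k) : ℚ)) ∧
    (∀ n k : ℕ, n < k →
      MvPowerSeries.coeff
        (Finsupp.single (0 : Fin 2) n + Finsupp.single (1 : Fin 2) k) G = 0) := by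
  set E := shear (fussSeries 0 1)
  have hE : E = 1 + X 0 * X 1 * E + X 0 * E ^ 3 := by
    simpa [mul_assoc] using congrArg shear fussSeries_zero_one_eq
  obtain rfl : G = E := by
    refine sub_eq_zero.mp (eq_zero_of_eq_X_mul_mul 0 (W := X 1 + G ^ 2 + G * E + E ^ 2) ?_)
    linear_combination hG - hE
  refine ⟨fun n k hkn => ?_, fun n k hnk => ?_⟩
  · obtain ⟨m, rfl⟩ := Nat.exists_eq_add_of_le hkn
    have h := coeff_bideg_shear (fussSeries 0 1) (k + m) k
    rw [if_pos hkn, Nat.add_sub_cancel_left, coeff_bideg_fussSeries, bideg] at h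
    rw [h, show 2 * (k + m) - 2 * k + 1 = 2 * m + 1 by omega,
      show 3 * (k + m) - 2 * k = 3 * m + k by omega, show 3 * (k + m) - 3 * k = 3 * m by omega,
      Nat.add_sub_cancel_left, add_zero, ← two_mul_add_one_mul_fussBallot_one]
    push_cast
    ring
  · simpa [bideg, hnk.not_ge] using coeff_bideg_shear (fussSeries 0 1) n k
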